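/- arXiv:0708.1155 — 2 statements merged into one kernel-verified Lean document; each statement's English description precedes it below -/
import Mathlib

section
/- (Phragmen–Lindelöf alternative.) Let μ ≤ 1/4 and let u be a local sub-harmonic of L_μ, defined on Ω_ρ for some ρ > 0. Suppose there exists a positive local super-harmonic h* of L_μ with limsup_{δ(x)→0} u(x)/h*(x) ≤ 0. Then for every positive local super-harmonic h of L_μ there exist c > 0 and ρ' > 0 such that u(x) ≤ c·h(x) for all x ∈ Ω_{ρ'}; in particular limsup_{δ(x)→0} u(x)/h(x) < ∞ for every positive local super-harmonic h. -/
/-!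
Fix `ε > 0` and a constant `c` bounding `u / h` on the compact level set `{δ = r}`. The function
`w = c h + ε h⋆ - u` is a supersolution of `L_μ` on every ring `Ω_{τ,r}`; it is nonnegative on the
outer boundary by the choice of `c`, and on the inner boundary once `τ` is so small that
`u ≤ ε h⋆` on `Ω_τ`. The weak minimum principle for `L_μ` relative to the positive supersolution
`h` gives `w ≥ 0` on the ring, and letting `τ → 0`, then `ε → 0`, gives `u ≤ c h` on `Ω_r`.

The minimum principle is proved for the quotient `w / h`, made strict by subtracting
`γ exp ⟪a, ·⟫` with `‖a‖` large compared with `|∇h| / h`.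
-/

open Set Metric MeasureTheory Real

noncomputable section

/-- Distance to the boundary of `Ω`. -/
def bdist {N : ℕ} (Ω : Set (EuclideanSpace ℝ (Fin N))) (x : EuclideanSpace ℝ (Fin N)) : ℝ :=
  Metric.infDist x Ωᶜ

/-- The collar `Ω_ρ = {x ∈ Ω : δ(x) < ρ}`. -/
def collar {N : ℕ} (Ω : Set (EuclideanSpace ℝ (Fin N))) (ρ : ℝ) :
    Set (EuclideanSpace ℝ (Fin N)) :=
  {x ∈ Ω | bdist Ω x < ρ}

/-- The ring `Ω_{ε,ρ} = {x ∈ Ω : ε < δ(x) < ρ}`. -/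
def ring' {N : ℕ} (Ω : Set (EuclideanSpace ℝ (Fin N))) (ε ρ : ℝ) :
    Set (EuclideanSpace ℝ (Fin N)) :=
  {x ∈ Ω | ε < bdist Ω x ∧ bdist Ω x < ρ}

/-- The Laplacian. -/
def lap {N : ℕ} (f : EuclideanSpace ℝ (Fin N) → ℝ) (x : EuclideanSpace ℝ (Fin N)) : ℝ :=
  ∑ i : Fin N, fderiv ℝ (fun y => fderiv ℝ f y (EuclideanSpace.single i 1)) x
    (EuclideanSpace.single i 1)

/-- `ρ₀` is a good collar width: `δ` is `C²` on `Ω_{ρ₀}`, `|∇δ| = 1` there, `Δδ` bounded. -/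
def GoodCollar {N : ℕ} (Ω : Set (EuclideanSpace ℝ (Fin N))) (ρ₀ : ℝ) : Prop :=
  0 < ρ₀ ∧ ContDiffOn ℝ 2 (bdist Ω) (collar Ω ρ₀) ∧
    (∀ x ∈ collar Ω ρ₀, ‖gradient (bdist Ω) x‖ = 1) ∧
    ∃ M, ∀ x ∈ collar Ω ρ₀, |lap (bdist Ω) x| ≤ M

/-- A super-harmonic of `L_μ = -Δ - μ/δ²` on `G`. -/
def SuperHarm {N : ℕ} (Ω : Set (EuclideanSpace ℝ (Fin N))) (μ : ℝ)
    (G : Set (EuclideanSpace ℝ (Fin N))) (h : EuclideanSpace ℝ (Fin N) → ℝ) : Prop :=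
  ContDiffOn ℝ 2 h G ∧ ∀ x ∈ G, 0 ≤ -(lap h x) - μ / (bdist Ω x) ^ 2 * h x

/-- A sub-harmonic of `L_μ = -Δ - μ/δ²` on `G`. -/
def SubHarm {N : ℕ} (Ω : Set (EuclideanSpace ℝ (Fin N))) (μ : ℝ)
    (G : Set (EuclideanSpace ℝ (Fin N))) (h : EuclideanSpace ℝ (Fin N) → ℝ) : Prop :=
  ContDiffOn ℝ 2 h G ∧ ∀ x ∈ G, -(lap h x) - μ / (bdist Ω x) ^ 2 * h x ≤ 0

/-- A positive local super-harmonic of `L_μ`, defined on the collar `Ω_σ`. -/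
def PosSuperHarmOn {N : ℕ} (Ω : Set (EuclideanSpace ℝ (Fin N))) (μ σ : ℝ)
    (h : EuclideanSpace ℝ (Fin N) → ℝ) : Prop :=
  SuperHarm Ω μ (collar Ω σ) h ∧ ∀ x ∈ collar Ω σ, 0 < h x

/-- A sub-solution of `(*)`: `-Δu - (μ/δ²)u + u^p/δ^s = 0` on `G`. -/
def SubSol {N : ℕ} (Ω : Set (EuclideanSpace ℝ (Fin N))) (μ s p : ℝ)
    (G : Set (EuclideanSpace ℝ (Fin N))) (u : EuclideanSpace ℝ (Fin N) → ℝ) : Prop :=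
  ContDiffOn ℝ 2 u G ∧ (∀ x ∈ G, 0 ≤ u x) ∧
    ∀ x ∈ G, -(lap u x) - μ / (bdist Ω x) ^ 2 * u x + (u x) ^ p / (bdist Ω x) ^ s ≤ 0

/-- A super-solution of `(*)` on `G`. -/
def SuperSol {N : ℕ} (Ω : Set (EuclideanSpace ℝ (Fin N))) (μ s p : ℝ)
    (G : Set (EuclideanSpace ℝ (Fin N))) (u : EuclideanSpace ℝ (Fin N) → ℝ) : Prop :=
  ContDiffOn ℝ 2 u G ∧ (∀ x ∈ G, 0 < u x) ∧
    ∀ x ∈ G, 0 ≤ -(lap u x) - μ / (bdist Ω x) ^ 2 * u x + (u x) ^ p / (bdist Ω x) ^ s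

/-- A regularized distance `(d, c)` on `Ω`. -/
def RegDist {N : ℕ} (Ω : Set (EuclideanSpace ℝ (Fin N))) (d : EuclideanSpace ℝ (Fin N) → ℝ)
    (c : ℝ) : Prop :=
  1 ≤ c ∧ ContDiffOn ℝ 2 d Ω ∧ (∀ x ∈ Ω, 0 < d x) ∧
    (∀ x ∈ Ω, c⁻¹ * bdist Ω x ≤ d x ∧ d x ≤ c * bdist Ω x) ∧
    (∀ x ∈ Ω, ‖gradient d x‖ ≤ c) ∧ (∀ x ∈ Ω, |lap d x| ≤ c / d x)

open Filter Topology Laplacian InnerProductSpace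
open scoped Gradient

theorem IsLocalMin.deriv_deriv_nonneg {g : ℝ → ℝ} {t₀ : ℝ} (hmin : IsLocalMin g t₀)
    (hg : ∀ᶠ t in 𝓝 t₀, DifferentiableAt ℝ g t) : 0 ≤ deriv (deriv g) t₀ := by
  by_contra! hneg
  set a := deriv (deriv g) t₀
  -- `k` lies strictly above `g` away from `t₀` but, by the second derivative test, has a local
  -- maximum at `t₀`
  set k : ℝ → ℝ := fun t => g t - a / 4 * (t - t₀) ^ 2
  have hk' : deriv k =ᶠ[𝓝 t₀] fun t => deriv g t - a / 2 * (t - t₀) := by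
    filter_upwards [hg] with t ht
    have hk : HasDerivAt k _ t :=
      ht.hasDerivAt.sub ((((hasDerivAt_id t).sub_const t₀).pow 2).const_mul (a / 4))
    rw [hk.deriv]
    simp only [Nat.cast_ofNat, id_eq, Nat.add_one_sub_one, pow_one, mul_one, sub_right_inj]
    ring
  have hk'' : deriv (deriv k) t₀ = a / 2 := by
    have hdg : DifferentiableAt ℝ (deriv g) t₀ := differentiableAt_of_deriv_ne_zero hneg.ne
    have hk : HasDerivAt (fun t => deriv g t - a / 2 * (t - t₀)) _ t₀ :=
      hdg.hasDerivAt.sub (((hasDerivAt_id t₀).sub_const t₀).const_mul (a / 2))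
    rw [hk'.deriv_eq, hk.deriv, mul_one]
    ring
  have hmax : IsLocalMax k t₀ :=
    isLocalMax_of_deriv_deriv_neg (by linarith) (by simp [hk'.eq_of_nhds, hmin.deriv_eq_zero])
      (hg.self_of_nhds.continuousAt.sub (by fun_prop))
  obtain ⟨t, ⟨hgt, hkt⟩, ht⟩ :=
    (((hmin.and hmax).filter_mono nhdsWithin_le_nhds).and
      (self_mem_nhdsWithin : {t₀}ᶜ ∈ 𝓝[≠] t₀)).exists
  have hpos : 0 < (t - t₀) ^ 2 := sq_pos_iff.2 (sub_ne_zero.2 ht)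
  simp only [k] at hkt
  nlinarith

section NormedSpace

variable {E : Type*} [NormedAddCommGroup E] [NormedSpace ℝ E]

theorem ContDiffAt.differentiableAt_fderiv {F : Type*} [NormedAddCommGroup F] [NormedSpace ℝ F]
    {f : E → F} {x : E} (hf : ContDiffAt ℝ 2 f x) :
    DifferentiableAt ℝ (fderiv ℝ f) x :=
  (hf.fderiv_right (m := 1) (by norm_num)).differentiableAt (by norm_num)

theorem IsLocalMin.fderiv_fderiv_apply_self_nonneg {f : E → ℝ} {x : E}
    (hmin : IsLocalMin f x) (hf : ContDiffAt ℝ 2 f x) (e : E) :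
    0 ≤ fderiv ℝ (fderiv ℝ f) x e e := by
  set L : ℝ → E := fun t => x + t • e
  have hL : ∀ t, HasDerivAt L e t := fun t =>
    (((hasDerivAt_id t).smul_const e).const_add x).congr_deriv (one_smul ℝ e)
  have hL0 : L 0 = x := by simp [L]
  have hdiff : ∀ᶠ t in 𝓝 (0 : ℝ), DifferentiableAt ℝ f (L t) :=
    (hL0 ▸ (hL 0).continuousAt.tendsto).eventually
      (hf.eventually (by simp) |>.mono fun y hy => hy.differentiableAt (by simp))
  have hderiv : deriv (f ∘ L) =ᶠ[𝓝 0] fun t => fderiv ℝ f (L t) e := by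
    filter_upwards [hdiff] with t ht
    exact (ht.hasFDerivAt.comp_hasDerivAt t (hL t)).deriv
  have hderiv2 : deriv (deriv (f ∘ L)) 0 = fderiv ℝ (fderiv ℝ f) x e e := by
    have hF : HasFDerivAt (fun y => fderiv ℝ f y e) ((fderiv ℝ (fderiv ℝ f) x).flip e) (L 0) := by
      rw [hL0]
      exact hf.differentiableAt_fderiv.hasFDerivAt.clm_apply (hasFDerivAt_const e x)
        |>.congr_fderiv (by ext; simp)
    have h := (hF.comp_hasDerivAt 0 (hL 0)).deriv
    rw [ContinuousLinearMap.flip_apply] at h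
    rwa [hderiv.deriv_eq]
  rw [← hderiv2]
  exact (hL0 ▸ hmin).comp_continuous (hL 0).continuousAt |>.deriv_deriv_nonneg
    (hdiff.mono fun t ht => ht.comp t (hL t).differentiableAt)

theorem fderiv_fderiv_mul_apply {f g : E → ℝ} {x : E} (hf : ContDiffAt ℝ 2 f x)
    (hg : ContDiffAt ℝ 2 g x) (e : E) :
    fderiv ℝ (fderiv ℝ fun y => f y * g y) x e e
      = f x * fderiv ℝ (fderiv ℝ g) x e e + 2 * (fderiv ℝ f x e * fderiv ℝ g x e)
        + g x * fderiv ℝ (fderiv ℝ f) x e e := by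
  have hD : fderiv ℝ (fun y => f y * g y)
      =ᶠ[𝓝 x] fun y => f y • fderiv ℝ g y + g y • fderiv ℝ f y := by
    filter_upwards [hf.eventually (by simp), hg.eventually (by simp)] with y hfy hgy
    exact fderiv_fun_mul (hfy.differentiableAt (by simp)) (hgy.differentiableAt (by simp))
  have hD2 : HasFDerivAt (fun y => f y • fderiv ℝ g y + g y • fderiv ℝ f y) _ x :=
    ((hf.differentiableAt (by simp)).hasFDerivAt.smul hg.differentiableAt_fderiv.hasFDerivAt).add
      ((hg.differentiableAt (by simp)).hasFDerivAt.smul hf.differentiableAt_fderiv.hasFDerivAt)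
  rw [hD.fderiv_eq, hD2.fderiv]
  simp only [add_apply, smul_apply,
    ContinuousLinearMap.smulRight_apply, smul_eq_mul]
  ring

end NormedSpace

section InnerProductSpace

variable {E : Type*} [NormedAddCommGroup E] [InnerProductSpace ℝ E]

theorem hasFDerivAt_exp_inner (a x : E) :
    HasFDerivAt (fun y => exp ⟪a, y⟫_ℝ) (exp ⟪a, x⟫_ℝ • innerSL ℝ a) x :=
  ((innerSL ℝ a).hasFDerivAt (x := x)).exp

theorem exists_two_mul_abs_fderiv_apply_lt [Nontrivial E] {h : E → ℝ} {K : Set E}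
    (hK : IsCompact K) (hKne : K.Nonempty) (hh : ContinuousOn h K)
    (hDh : ContinuousOn (fderiv ℝ h) K) (hpos : ∀ x ∈ K, 0 < h x) :
    ∃ a : E, ∀ x ∈ K, 2 * |fderiv ℝ h x a| < ‖a‖ ^ 2 * h x := by
  obtain ⟨x₁, hx₁, hmin⟩ := hK.exists_isMinOn hKne hh
  obtain ⟨B, hB⟩ := hK.exists_bound_of_continuousOn hDh
  obtain ⟨e, he⟩ := exists_norm_eq E zero_le_one
  have hm := hpos x₁ hx₁
  have hB0 : 0 ≤ B := (norm_nonneg _).trans (hB x₁ hx₁)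
  set t := (2 * B + 1) / h x₁
  have ht : 0 < t := by positivity
  have htm : t * h x₁ = 2 * B + 1 := div_mul_cancel₀ _ hm.ne'
  refine ⟨t • e, fun x hx => ?_⟩
  have hDx : |fderiv ℝ h x e| ≤ B := by
    simpa [he] using (fderiv ℝ h x).le_opNorm e |>.trans
      (mul_le_mul_of_nonneg_right (hB x hx) (norm_nonneg e))
  rw [map_smul, smul_eq_mul, abs_mul, abs_of_pos ht, norm_smul, he, Real.norm_of_nonneg ht.le]
  nlinarith [hmin hx, mul_le_mul_of_nonneg_left (hmin hx) (mul_pos ht ht).le]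

variable [FiniteDimensional ℝ E]

theorem laplacian_eq_sum_fderiv_fderiv {F : Type*} [NormedAddCommGroup F] [NormedSpace ℝ F]
    {ι : Type*} [Fintype ι] (b : OrthonormalBasis ι ℝ E) (f : E → F) (x : E) :
    Δ f x = ∑ i, fderiv ℝ (fderiv ℝ f) x (b i) (b i) := by
  simp [laplacian_eq_iteratedFDeriv_orthonormalBasis f b, iteratedFDeriv_two_apply]

theorem IsLocalMin.laplacian_nonneg {f : E → ℝ} {x : E} (hmin : IsLocalMin f x)
    (hf : ContDiffAt ℝ 2 f x) : 0 ≤ Δ f x := by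
  rw [laplacian_eq_sum_fderiv_fderiv (stdOrthonormalBasis ℝ E)]
  exact Finset.sum_nonneg fun i _ => hmin.fderiv_fderiv_apply_self_nonneg hf _

theorem ContDiffAt.laplacian_mul {f g : E → ℝ} {x : E} (hf : ContDiffAt ℝ 2 f x)
    (hg : ContDiffAt ℝ 2 g x) :
    Δ (fun y => f y * g y) x = f x * Δ g x + 2 * ⟪∇ f x, ∇ g x⟫_ℝ + g x * Δ f x := by
  set b := stdOrthonormalBasis ℝ E
  have hcross : ∑ i, fderiv ℝ f x (b i) * fderiv ℝ g x (b i) = ⟪∇ f x, ∇ g x⟫_ℝ := by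
    rw [← b.sum_inner_mul_inner]
    simp [inner_gradient_left, inner_gradient_right]
  simp only [laplacian_eq_sum_fderiv_fderiv b, fderiv_fderiv_mul_apply hf hg, ← hcross,
    Finset.sum_add_distrib, Finset.mul_sum]

theorem laplacian_exp_inner (a x : E) :
    Δ (fun y => exp ⟪a, y⟫_ℝ) x = ‖a‖ ^ 2 * exp ⟪a, x⟫_ℝ := by
  have hD : fderiv ℝ (fun y => exp ⟪a, y⟫_ℝ) = fun y => exp ⟪a, y⟫_ℝ • innerSL ℝ a :=
    funext fun y => (hasFDerivAt_exp_inner a y).fderiv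
  set b := stdOrthonormalBasis ℝ E
  rw [laplacian_eq_sum_fderiv_fderiv b, hD,
    ((hasFDerivAt_exp_inner a x).smul_const (innerSL ℝ a)).fderiv, ← real_inner_self_eq_norm_sq,
    ← b.sum_inner_mul_inner a a, Finset.sum_mul]
  congr! 1 with i
  simp only [ContinuousLinearMap.smulRight_apply, smul_apply,
    coe_innerSL_apply, smul_eq_mul, real_inner_comm]
  ring

theorem not_isLocalMin_div_sub_exp_inner {w h : E → ℝ} {z a : E} {c γ : ℝ}
    (hw : ContDiffAt ℝ 2 w z) (hh : ContDiffAt ℝ 2 h z) (hhz : 0 < h z) (hwz : w z ≤ 0)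
    (hγ : 0 < γ) (hLh : 0 ≤ -Δ h z - c * h z) (hLw : 0 ≤ -Δ w z - c * w z)
    (ha : 2 * |fderiv ℝ h z a| < ‖a‖ ^ 2 * h z) :
    ¬ IsLocalMin (fun y => w y / h y - γ * exp ⟪a, y⟫_ℝ) z := by
  intro hmin
  set v : E → ℝ := fun y => w y / h y
  set φ : E → ℝ := fun y => exp ⟪a, y⟫_ℝ
  have hv : ContDiffAt ℝ 2 v z := hw.div hh hhz.ne'
  have hφ : ContDiffAt ℝ 2 φ z := (contDiff_exp.comp (innerSL ℝ a).contDiff).contDiffAt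
  have hγφ : ContDiffAt ℝ 2 (γ • φ) z := hφ.const_smul γ
  have hwv : w =ᶠ[𝓝 z] fun y => v y * h y := by
    filter_upwards [hh.continuousAt.eventually (lt_mem_nhds hhz)] with y hy
    exact (div_mul_cancel₀ _ hy.ne').symm
  have hDv : fderiv ℝ v z = γ • fderiv ℝ φ z := by
    have hφd := hφ.differentiableAt two_ne_zero
    have := hmin.fderiv_eq_zero
    rwa [fderiv_fun_sub (hv.differentiableAt two_ne_zero) (hφd.const_mul γ),
      fderiv_const_mul hφd, sub_eq_zero] at this
  have hΔv : γ * (‖a‖ ^ 2 * φ z) ≤ Δ v z := by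
    have := IsLocalMin.laplacian_nonneg (f := v - γ • φ) hmin (hv.sub hγφ)
    rwa [hv.laplacian_sub hγφ, laplacian_smul γ hφ, laplacian_exp_inner, sub_nonneg] at this
  have hcross : ⟪∇ v z, ∇ h z⟫_ℝ = γ * φ z * fderiv ℝ h z a := by
    rw [inner_gradient_left, hDv, (hasFDerivAt_exp_inner a z).fderiv]
    simp only [smul_apply, coe_innerSL_apply, inner_gradient_right,
      RCLike.conj_to_real, smul_eq_mul]
    ring
  rw [(laplacian_congr_nhds hwv).eq_of_nhds, hv.laplacian_mul hh, hcross, hwv.eq_of_nhds] at hLw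
  have hvz : v z ≤ 0 := div_nonpos_of_nonpos_of_nonneg hwz hhz.le
  -- `-Δ(v h) - c v h = v (-Δh - c h) - 2 γ φ ∂ₐh - h Δv ≤ γ φ (2 |∂ₐh| - ‖a‖² h) < 0`
  nlinarith [mul_nonpos_of_nonpos_of_nonneg hvz hLh, neg_abs_le (fderiv ℝ h z a),
    mul_le_mul_of_nonneg_left hΔv hhz.le, mul_pos (mul_pos hγ (exp_pos ⟪a, z⟫_ℝ)) (sub_pos.2 ha)]

theorem weak_minimum_principle [Nontrivial E] {w h c : E → ℝ} {S : Set E} (hS : IsOpen S)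
    (hSb : Bornology.IsBounded S) (hw : ∀ x ∈ closure S, ContDiffAt ℝ 2 w x)
    (hh : ∀ x ∈ closure S, ContDiffAt ℝ 2 h x) (hpos : ∀ x ∈ closure S, 0 < h x)
    (hLh : ∀ x ∈ S, 0 ≤ -Δ h x - c x * h x) (hLw : ∀ x ∈ S, 0 ≤ -Δ w x - c x * w x)
    (hfr : ∀ x ∈ frontier S, 0 ≤ w x) : ∀ x ∈ S, 0 ≤ w x := by
  intro x₀ hx₀
  have hK : IsCompact (closure S) := hSb.isCompact_closure
  have hKne : (closure S).Nonempty := ⟨x₀, subset_closure hx₀⟩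
  have hx₀K : x₀ ∈ closure S := subset_closure hx₀
  have hwc : ContinuousOn w (closure S) := fun x hx => (hw x hx).continuousAt.continuousWithinAt
  have hhc : ContinuousOn h (closure S) := fun x hx => (hh x hx).continuousAt.continuousWithinAt
  obtain ⟨a, ha⟩ := exists_two_mul_abs_fderiv_apply_lt hK hKne hhc
    (fun x hx => ((hh x hx).continuousAt_fderiv two_ne_zero).continuousWithinAt) hpos
  have hφc : Continuous fun y => exp ⟪a, y⟫_ℝ := by fun_prop
  obtain ⟨y₁, -, hy₁⟩ := hK.exists_isMaxOn hKne hφc.continuousOn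
  have hΦ : 0 < exp ⟪a, y₁⟫_ℝ := exp_pos _
  have hγ : ∀ γ > 0, -(γ * exp ⟪a, y₁⟫_ℝ) ≤ w x₀ / h x₀ := by
    intro γ hγ
    obtain ⟨z, hzK, hzmin⟩ := hK.exists_isMinOn hKne
      ((hwc.div hhc fun x hx => (hpos x hx).ne').sub (hφc.continuousOn.const_smul γ))
    have hwz : 0 ≤ w z := by
      by_contra! hneg
      have hzS : z ∈ S := by
        by_contra hzS
        exact hneg.not_ge (hfr z ⟨hzK, by rwa [hS.interior_eq]⟩)
      exact not_isLocalMin_div_sub_exp_inner (hw z hzK) (hh z hzK) (hpos z hzK) hneg.le hγ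
        (hLh z hzS) (hLw z hzS) (ha z hzK)
        (hzmin.isLocalMin (mem_of_superset (hS.mem_nhds hzS) subset_closure))
    have hmin : w z / h z - γ * exp ⟪a, z⟫_ℝ ≤ w x₀ / h x₀ - γ * exp ⟪a, x₀⟫_ℝ := hzmin hx₀K
    have hmax : exp ⟪a, z⟫_ℝ ≤ exp ⟪a, y₁⟫_ℝ := hy₁ hzK
    nlinarith [div_nonneg hwz (hpos z hzK).le, mul_le_mul_of_nonneg_left hmax hγ.le,
      mul_pos hγ (exp_pos ⟪a, x₀⟫_ℝ)]
  have hq : 0 ≤ w x₀ / h x₀ := le_of_forall_pos_le_add fun ε hε => by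
    have := hγ (ε / exp ⟪a, y₁⟫_ℝ) (by positivity)
    rw [div_mul_cancel₀ _ hΦ.ne'] at this
    linarith
  exact (div_nonneg_iff.1 hq).elim (·.1) fun hneg => absurd hneg.2 (hpos x₀ hx₀K).not_ge

end InnerProductSpace

theorem IsCompact.exists_pos_le_mul {X : Type*} [TopologicalSpace X] {K : Set X} {u h : X → ℝ}
    (hK : IsCompact K) (hu : ContinuousOn u K) (hh : ContinuousOn h K)
    (hpos : ∀ x ∈ K, 0 < h x) : ∃ c > 0, ∀ x ∈ K, u x ≤ c * h x := by
  obtain ⟨C, hC⟩ := hK.exists_bound_of_continuousOn (hu.div hh fun x hx => (hpos x hx).ne')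
  refine ⟨max C 1, by positivity, fun x hx => ?_⟩
  rw [← div_le_iff₀ (hpos x hx)]
  exact (le_abs_self _).trans ((hC x hx).trans (le_max_left _ _))

section Collar

variable {N : ℕ} {Ω : Set (EuclideanSpace ℝ (Fin N))} {μ : ℝ}

local notation "ℝᴺ" => EuclideanSpace ℝ (Fin N)

theorem lap_eq_laplacian {f : ℝᴺ → ℝ} {x : ℝᴺ} (hf : ContDiffAt ℝ 2 f x) :
    lap f x = Δ f x := by
  rw [laplacian_eq_sum_fderiv_fderiv (EuclideanSpace.basisFun (Fin N) ℝ)]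
  refine Finset.sum_congr rfl fun i _ => ?_
  rw [EuclideanSpace.basisFun_apply,
    fderiv_clm_apply hf.differentiableAt_fderiv (differentiableAt_const _)]
  simp

theorem SuperHarm.neg_laplacian_sub_nonneg {G : Set ℝᴺ} (hG : IsOpen G) {h : ℝᴺ → ℝ}
    (hh : SuperHarm Ω μ G h) : ∀ x ∈ G, 0 ≤ -Δ h x - μ / bdist Ω x ^ 2 * h x := fun x hx =>
  lap_eq_laplacian (hh.1.contDiffAt (hG.mem_nhds hx)) ▸ hh.2 x hx

theorem SuperHarm.smul_add_smul_sub {G : Set ℝᴺ} (hG : IsOpen G) {f g u : ℝᴺ → ℝ} {a b : ℝ}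
    (ha : 0 ≤ a) (hb : 0 ≤ b) (hf : SuperHarm Ω μ G f) (hg : SuperHarm Ω μ G g)
    (hu : SubHarm Ω μ G u) : SuperHarm Ω μ G (a • f + b • g - u) := by
  refine ⟨((hf.1.const_smul a).add (hg.1.const_smul b)).sub hu.1, fun x hx => ?_⟩
  have hx' := hG.mem_nhds hx
  have hfx := hf.1.contDiffAt hx'
  have hgx := hg.1.contDiffAt hx'
  have hux := hu.1.contDiffAt hx'
  have hafx : ContDiffAt ℝ 2 (a • f) x := hfx.const_smul a
  have hbgx : ContDiffAt ℝ 2 (b • g) x := hgx.const_smul b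
  have habx : ContDiffAt ℝ 2 (a • f + b • g) x := hafx.add hbgx
  have hwx : ContDiffAt ℝ 2 (a • f + b • g - u) x := habx.sub hux
  rw [lap_eq_laplacian hwx, habx.laplacian_sub hux, hafx.laplacian_add hbgx,
    laplacian_smul a hfx, laplacian_smul b hgx, ← lap_eq_laplacian hfx, ← lap_eq_laplacian hgx, ← lap_eq_laplacian hux]
  simp only [Pi.sub_apply, Pi.add_apply, Pi.smul_apply, smul_eq_mul]
  nlinarith [mul_nonneg ha (hf.2 x hx), mul_nonneg hb (hg.2 x hx), hu.2 x hx]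

theorem collar_mono {r R : ℝ} (hrR : r ≤ R) : collar Ω r ⊆ collar Ω R :=
  fun _ hx => ⟨hx.1, hx.2.trans_le hrR⟩

theorem SubHarm.mono {G G' : Set ℝᴺ} {u : ℝᴺ → ℝ} (hu : SubHarm Ω μ G u) (hG : G' ⊆ G) :
    SubHarm Ω μ G' u :=
  ⟨hu.1.mono hG, fun x hx => hu.2 x (hG hx)⟩

theorem PosSuperHarmOn.mono {r R : ℝ} {h : ℝᴺ → ℝ} (hh : PosSuperHarmOn Ω μ R h) (hrR : r ≤ R) :
    PosSuperHarmOn Ω μ r h :=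
  ⟨⟨hh.1.1.mono (collar_mono hrR), fun x hx => hh.1.2 x (collar_mono hrR hx)⟩,
    fun x hx => hh.2 x (collar_mono hrR hx)⟩

theorem continuous_bdist : Continuous (bdist Ω) := continuous_infDist_pt _

theorem mem_of_bdist_pos {x : ℝᴺ} (hx : 0 < bdist Ω x) : x ∈ Ω := by
  by_contra hxΩ
  exact hx.ne' (infDist_zero_of_mem hxΩ)

theorem isOpen_collar (hΩ : IsOpen Ω) (R : ℝ) : IsOpen (collar Ω R) :=
  hΩ.inter (isOpen_Iio.preimage continuous_bdist)

theorem isOpen_ring' (hΩ : IsOpen Ω) (a b : ℝ) : IsOpen (ring' Ω a b) :=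
  hΩ.inter (isOpen_Ioo.preimage continuous_bdist)

theorem isCompact_setOf_bdist_eq (hΩ : Bornology.IsBounded Ω) {r : ℝ} (hr : 0 < r) :
    IsCompact {x | bdist Ω x = r} :=
  isCompact_of_isClosed_isBounded (isClosed_eq continuous_bdist continuous_const)
    (hΩ.subset fun x (hx : bdist Ω x = r) => mem_of_bdist_pos (hx ▸ hr))

theorem closure_ring'_subset (a b : ℝ) : closure (ring' Ω a b) ⊆ bdist Ω ⁻¹' Icc a b :=
  closure_minimal (fun _ hx => ⟨hx.2.1.le, hx.2.2.le⟩) (isClosed_Icc.preimage continuous_bdist)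

theorem closure_ring'_subset_collar {a b R : ℝ} (ha : 0 < a) (hbR : b < R) :
    closure (ring' Ω a b) ⊆ collar Ω R := fun _ hx =>
  have hx' := closure_ring'_subset a b hx
  ⟨mem_of_bdist_pos (ha.trans_le hx'.1), hx'.2.trans_lt hbR⟩

theorem frontier_ring'_subset (hΩ : IsOpen Ω) {a b : ℝ} (ha : 0 < a) :
    frontier (ring' Ω a b) ⊆ {x | bdist Ω x = a ∨ bdist Ω x = b} := by
  intro x hx
  rw [(isOpen_ring' hΩ a b).frontier_eq] at hx
  obtain ⟨hxc, hxS⟩ := hx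
  obtain ⟨hxa, hxb⟩ := closure_ring'_subset a b hxc
  show bdist Ω x = a ∨ bdist Ω x = b
  by_contra! hne
  exact hxS ⟨mem_of_bdist_pos (ha.trans_le hxa), hxa.lt_of_ne' hne.1, hxb.lt_of_ne hne.2⟩

theorem SuperHarm.nonneg_on_ring' [NeZero N] (hΩo : IsOpen Ω) (hΩb : Bornology.IsBounded Ω)
    {h w : ℝᴺ → ℝ} {a b R : ℝ} (hw : SuperHarm Ω μ (collar Ω R) w)
    (hh : PosSuperHarmOn Ω μ R h) (ha : 0 < a) (hbR : b < R)
    (hfr : ∀ x ∈ frontier (ring' Ω a b), 0 ≤ w x) : ∀ x ∈ ring' Ω a b, 0 ≤ w x := by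
  have hcl := closure_ring'_subset_collar (Ω := Ω) ha hbR
  have hR := isOpen_collar hΩo R
  have hS : ring' Ω a b ⊆ collar Ω R := subset_closure.trans hcl
  exact weak_minimum_principle (isOpen_ring' hΩo a b) (hΩb.subset fun _ hx => hx.1)
    (fun x hx => hw.1.contDiffAt (hR.mem_nhds (hcl hx)))
    (fun x hx => hh.1.1.contDiffAt (hR.mem_nhds (hcl hx))) (fun x hx => hh.2 x (hcl hx))
    (fun x hx => hh.1.neg_laplacian_sub_nonneg hR x (hS hx))
    (fun x hx => hw.neg_laplacian_sub_nonneg hR x (hS hx)) hfr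

theorem SubHarm.le_mul_on_collar [NeZero N] (hΩo : IsOpen Ω) (hΩb : Bornology.IsBounded Ω)
    {u h h' : ℝᴺ → ℝ} {r R c : ℝ} (hu : SubHarm Ω μ (collar Ω R) u)
    (hh : PosSuperHarmOn Ω μ R h) (hh' : PosSuperHarmOn Ω μ R h') (hr : 0 < r) (hrR : r < R)
    (hc : 0 ≤ c) (hlevel : ∀ x, bdist Ω x = r → u x ≤ c * h x)
    (hbdry : ∀ ε > 0, ∃ τ > 0, ∀ x ∈ collar Ω τ, u x ≤ ε * h' x) :
    ∀ x ∈ collar Ω r, u x ≤ c * h x := by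
  intro x hx
  have hxR := collar_mono hrR.le hx
  refine le_of_forall_pos_le_add fun ε' hε' => ?_
  have hh'x := hh'.2 x hxR
  set ε := ε' / h' x
  have hε : 0 < ε := by positivity
  suffices u x ≤ c * h x + ε * h' x by rwa [div_mul_cancel₀ _ hh'x.ne'] at this
  obtain ⟨τ, hτ, hτu⟩ := hbdry ε hε
  have hnear : ∀ y ∈ collar Ω R, u y ≤ ε * h' y → u y ≤ c * h y + ε * h' y := fun y hy hle => by
    nlinarith [mul_nonneg hc (hh.2 y hy).le]
  by_cases hxτ : bdist Ω x < τ
  · exact hnear x hxR (hτu x ⟨hx.1, hxτ⟩)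
  obtain ⟨τ', hτ', hτ'τ, hτ'r⟩ : ∃ τ', 0 < τ' ∧ τ' < τ ∧ τ' < r :=
    ⟨min τ r / 2, by positivity, by linarith [min_le_left τ r], by linarith [min_le_right τ r]⟩
  have hw := hh.1.smul_add_smul_sub (isOpen_collar hΩo R) hc hε.le hh'.1 hu
  have hfr : ∀ y ∈ frontier (ring' Ω τ' r), 0 ≤ (c • h + ε • h' - u) y := by
    intro y hy
    simp only [Pi.sub_apply, Pi.add_apply, Pi.smul_apply, smul_eq_mul, sub_nonneg]
    rcases frontier_ring'_subset hΩo hτ' hy with hyτ' | hyr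
    · have hyR : y ∈ collar Ω R := ⟨mem_of_bdist_pos (hyτ' ▸ hτ'), hyτ' ▸ hτ'r.trans hrR⟩
      exact hnear y hyR (hτu y ⟨hyR.1, hyτ' ▸ hτ'τ⟩)
    · have hyR : y ∈ collar Ω R := ⟨mem_of_bdist_pos (hyr ▸ hr), hyr ▸ hrR⟩
      nlinarith [hlevel y hyr, mul_pos hε (hh'.2 y hyR)]
  have := hw.nonneg_on_ring' hΩo hΩb hh hτ' hrR hfr x ⟨hx.1, hτ'τ.trans_le (not_lt.1 hxτ), hx.2⟩
  simp only [Pi.sub_apply, Pi.add_apply, Pi.smul_apply, smul_eq_mul] at this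
  linarith

theorem SubHarm.exists_le_mul_on_collar [NeZero N] (hΩo : IsOpen Ω)
    (hΩb : Bornology.IsBounded Ω) {u h' : ℝᴺ → ℝ} {ρ σ' : ℝ} (hρ : 0 < ρ)
    (hu : SubHarm Ω μ (collar Ω ρ) u) (hσ' : 0 < σ') (hh' : PosSuperHarmOn Ω μ σ' h')
    (hbdry : ∀ ε > 0, ∃ τ > 0, ∀ x ∈ collar Ω τ, u x ≤ ε * h' x) :
    ∀ σ, 0 < σ → ∀ h, PosSuperHarmOn Ω μ σ h →
      ∃ c, 0 < c ∧ ∃ ρ', 0 < ρ' ∧ ρ' ≤ min ρ σ ∧ ∀ x ∈ collar Ω ρ', u x ≤ c * h x := by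
  intro σ hσ h hh
  set R := min (min ρ σ) σ'
  have hR : 0 < R := by positivity
  have hRρσ : R ≤ min ρ σ := min_le_left _ _
  have hRρ : R ≤ ρ := hRρσ.trans (min_le_left _ _)
  have hhR := hh.mono (hRρσ.trans (min_le_right _ _))
  have hlevel : {x | bdist Ω x = R / 2} ⊆ collar Ω R := fun x (hx : bdist Ω x = R / 2) =>
    ⟨mem_of_bdist_pos (by rw [hx]; positivity), by rw [hx]; linarith⟩
  obtain ⟨c, hc, hcu⟩ := (isCompact_setOf_bdist_eq hΩb (half_pos hR)).exists_pos_le_mul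
    (hu.1.continuousOn.mono (hlevel.trans (collar_mono hRρ))) (hhR.1.1.continuousOn.mono hlevel)
    fun x hx => hhR.2 x (hlevel hx)
  exact ⟨c, hc, R / 2, half_pos hR, (half_le_self hR.le).trans hRρσ,
    (hu.mono (collar_mono hRρ)).le_mul_on_collar hΩo hΩb hhR (hh'.mono (min_le_right _ _))
      (half_pos hR) (half_lt_self hR) hc.le hcu hbdry⟩

end Collar

theorem stmt3_general {N : ℕ} (hN : 2 ≤ N) (Ω : Set (EuclideanSpace ℝ (Fin N)))
    (hΩo : IsOpen Ω) (hΩb : Bornology.IsBounded Ω)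
    (μ : ℝ)
    (u : EuclideanSpace ℝ (Fin N) → ℝ) (ρ : ℝ) (hρ : 0 < ρ)
    (hu : SubHarm Ω μ (collar Ω ρ) u)
    (hstar : ∃ σ, 0 < σ ∧ ∃ hs : EuclideanSpace ℝ (Fin N) → ℝ, PosSuperHarmOn Ω μ σ hs ∧
      ∀ ε : ℝ, 0 < ε → ∃ τ, 0 < τ ∧ τ ≤ min ρ σ ∧
        ∀ x ∈ collar Ω τ, u x / hs x ≤ ε) :
    (∀ σ, 0 < σ → ∀ h : EuclideanSpace ℝ (Fin N) → ℝ, PosSuperHarmOn Ω μ σ h →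
      ∃ c, 0 < c ∧ ∃ ρ', 0 < ρ' ∧ ρ' ≤ min ρ σ ∧ ∀ x ∈ collar Ω ρ', u x ≤ c * h x) ∧
    (∀ σ, 0 < σ → ∀ h : EuclideanSpace ℝ (Fin N) → ℝ, PosSuperHarmOn Ω μ σ h →
      ∃ C : ℝ, ∃ τ, 0 < τ ∧ τ ≤ min ρ σ ∧ ∀ x ∈ collar Ω τ, u x / h x ≤ C) := by
  have : NeZero N := ⟨by omega⟩
  obtain ⟨σ', hσ', h', hh', hlim⟩ := hstar
  have hbdry : ∀ ε > 0, ∃ τ > 0, ∀ x ∈ collar Ω τ, u x ≤ ε * h' x := fun ε hε => by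
    obtain ⟨τ, hτ, hτle, hτu⟩ := hlim ε hε
    refine ⟨τ, hτ, fun x hx => (div_le_iff₀ (hh'.2 x ?_)).1 (hτu x hx)⟩
    exact collar_mono (hτle.trans (min_le_right _ _)) hx
  have hmain := hu.exists_le_mul_on_collar hΩo hΩb hρ hσ' hh' hbdry
  refine ⟨hmain, fun σ hσ h hh => ?_⟩
  obtain ⟨c, -, τ, hτ, hτle, hle⟩ := hmain σ hσ h hh
  refine ⟨c, τ, hτ, hτle, fun x hx => (div_le_iff₀ (hh.2 x ?_)).2 (hle x hx)⟩
  exact collar_mono (hτle.trans (min_le_right _ _)) hx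

/-- (Phragmen–Lindelöf alternative.) Let `μ ≤ 1/4` and let `u` be a local
sub-harmonic of `L_μ` on `Ω_ρ`. If there is a positive local super-harmonic `h⋆` with
`limsup_{δ(x)→0} u(x)/h⋆(x) ≤ 0`, then for every positive local super-harmonic `h` there
are `c > 0` and `ρ' > 0` with `u ≤ c·h` on `Ω_{ρ'}`; in particular
`limsup_{δ(x)→0} u(x)/h(x) < ∞` for every positive local super-harmonic `h`. -/
theorem stmt3 {N : ℕ} (hN : 2 ≤ N) (Ω : Set (EuclideanSpace ℝ (Fin N)))
    (hΩo : IsOpen Ω) (hΩne : Ω.Nonempty) (hΩb : Bornology.IsBounded Ω)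
    (μ : ℝ) (hμ : μ ≤ 1 / 4)
    (u : EuclideanSpace ℝ (Fin N) → ℝ) (ρ : ℝ) (hρ : 0 < ρ)
    (hu : SubHarm Ω μ (collar Ω ρ) u)
    (hstar : ∃ σ, 0 < σ ∧ ∃ hs : EuclideanSpace ℝ (Fin N) → ℝ, PosSuperHarmOn Ω μ σ hs ∧
      ∀ ε : ℝ, 0 < ε → ∃ τ, 0 < τ ∧ τ ≤ min ρ σ ∧
        ∀ x ∈ collar Ω τ, u x / hs x ≤ ε) :
    (∀ σ, 0 < σ → ∀ h : EuclideanSpace ℝ (Fin N) → ℝ, PosSuperHarmOn Ω μ σ h →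
      ∃ c, 0 < c ∧ ∃ ρ', 0 < ρ' ∧ ρ' ≤ min ρ σ ∧ ∀ x ∈ collar Ω ρ', u x ≤ c * h x) ∧
    (∀ σ, 0 < σ → ∀ h : EuclideanSpace ℝ (Fin N) → ℝ, PosSuperHarmOn Ω μ σ h →
      ∃ C : ℝ, ∃ τ, 0 < τ ∧ τ ≤ min ρ σ ∧ ∀ x ∈ collar Ω τ, u x / h x ≤ C) :=
  stmt3_general hN Ω hΩo hΩb μ u ρ hρ hu hstar
end
end

section
/- Let μ < 1/4. (a) If β ∈ (β₋, β₊) then there exists ρ ∈ (0, ρ₀) such that x ↦ δ(x)^β is a super-harmonic of L_μ on Ω_ρ. (b) If β < β₋ or β > β₊ then there exists ρ ∈ (0, ρ₀) such that x ↦ δ(x)^β is a sub-harmonic of L_μ on Ω_ρ. -/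
open Set Metric MeasureTheory Real

noncomputable section

/-!
Since `|∇δ| = 1`, the chain rule gives
`L_μ δ^β = δ^(β-2) ((β(1-β) - μ) - β δ Δδ)`.
As `Δδ` is bounded, the term `β δ Δδ` tends to `0` at the boundary, so on a thin enough collar
`L_μ δ^β` has the sign of `β(1-β) - μ = (β - β₋)(β₊ - β)`.
-/

lemma isOpen_collar_s4 {N : ℕ} {Ω : Set (EuclideanSpace ℝ (Fin N))} (hΩ : IsOpen Ω) (ρ : ℝ) :
    IsOpen (collar Ω ρ) :=
  hΩ.inter (isOpen_Iio.preimage (continuous_infDist_pt _))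

lemma collar_subset_collar {N : ℕ} (Ω : Set (EuclideanSpace ℝ (Fin N))) {ρ ρ' : ℝ}
    (h : ρ ≤ ρ') : collar Ω ρ ⊆ collar Ω ρ' :=
  fun _ hx => ⟨hx.1, hx.2.trans_le h⟩

lemma bdist_pos {N : ℕ} (hN : N ≠ 0) {Ω : Set (EuclideanSpace ℝ (Fin N))} (hΩo : IsOpen Ω)
    (hΩb : Bornology.IsBounded Ω) {x : EuclideanSpace ℝ (Fin N)} (hx : x ∈ Ω) :
    0 < bdist Ω x := by
  have : Nonempty (Fin N) := ⟨⟨0, Nat.pos_of_ne_zero hN⟩⟩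
  have hcompl : Ωᶜ.Nonempty := by
    by_contra h
    rw [Set.not_nonempty_iff_eq_empty, Set.compl_empty_iff] at h
    exact NormedSpace.unbounded_univ ℝ (EuclideanSpace ℝ (Fin N)) (h ▸ hΩb)
  exact (hΩo.isClosed_compl.notMem_iff_infDist_pos hcompl).mp (by simpa using hx)

lemma sum_fderiv_single_sq {N : ℕ} (f : EuclideanSpace ℝ (Fin N) → ℝ)
    (x : EuclideanSpace ℝ (Fin N)) :
    ∑ i, (fderiv ℝ f x (EuclideanSpace.single i 1)) ^ 2 = ‖gradient f x‖ ^ 2 := by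
  have hpartial : ∀ i, fderiv ℝ f x (EuclideanSpace.single i 1) = gradient f x i := by
    intro i
    rw [← inner_gradient_left, EuclideanSpace.inner_single_right]
    simp
  simp_rw [hpartial, EuclideanSpace.real_norm_sq_eq]

lemma fderiv_fderiv_rpow_apply {E : Type*} [NormedAddCommGroup E] [NormedSpace ℝ E]
    {f : E → ℝ} {U : Set E} (hU : IsOpen U) (hf : ContDiffOn ℝ 2 f U)
    (hpos : ∀ y ∈ U, 0 < f y) {x : E} (hx : x ∈ U) (β : ℝ) (v : E) :
    fderiv ℝ (fun y => fderiv ℝ (fun z => f z ^ β) y v) x v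
      = β * (β - 1) * f x ^ (β - 2) * (fderiv ℝ f x v) ^ 2
        + β * f x ^ (β - 1) * fderiv ℝ (fun y => fderiv ℝ f y v) x v := by
  have hdiff : ∀ y ∈ U, DifferentiableAt ℝ f y := fun y hy =>
    (hf.contDiffAt (hU.mem_nhds hy)).differentiableAt (by norm_num)
  have hrpow : ∀ γ, ∀ y ∈ U,
      HasFDerivAt (fun z => f z ^ γ) ((γ * f y ^ (γ - 1)) • fderiv ℝ f y) y :=
    fun γ y hy => (hdiff y hy).hasFDerivAt.rpow_const (Or.inl (hpos y hy).ne')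
  have hfirst : (fun y => fderiv ℝ (fun z => f z ^ β) y v)
      =ᶠ[nhds x] fun y => β * f y ^ (β - 1) * fderiv ℝ f y v := by
    filter_upwards [hU.mem_nhds hx] with y hy
    simp [(hrpow β y hy).fderiv]
  have hcoeff : HasFDerivAt (fun y => β * f y ^ (β - 1))
      (β • (((β - 1) * f x ^ (β - 2)) • fderiv ℝ f x)) x := by
    have := (hrpow (β - 1) x hx).const_mul β
    rwa [show β - 1 - 1 = β - 2 by ring] at this
  have hpartial : DifferentiableAt ℝ (fun y => fderiv ℝ f y v) x :=
    (((hf.fderiv_of_isOpen hU (by norm_num)).contDiffAt (hU.mem_nhds hx)).differentiableAt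
      one_ne_zero).clm_apply (differentiableAt_const v)
  rw [hfirst.fderiv_eq, fderiv_fun_mul hcoeff.differentiableAt hpartial, hcoeff.fderiv]
  simp only [add_apply, smul_apply, smul_eq_mul]
  ring

lemma lap_rpow {N : ℕ} {f : EuclideanSpace ℝ (Fin N) → ℝ} {U : Set (EuclideanSpace ℝ (Fin N))}
    (hU : IsOpen U) (hf : ContDiffOn ℝ 2 f U) (hpos : ∀ y ∈ U, 0 < f y)
    {x : EuclideanSpace ℝ (Fin N)} (hx : x ∈ U) (β : ℝ) :
    lap (fun y => f y ^ β) x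
      = β * (β - 1) * f x ^ (β - 2) * ‖gradient f x‖ ^ 2 + β * f x ^ (β - 1) * lap f x := by
  simp only [lap, fderiv_fderiv_rpow_apply hU hf hpos hx, Finset.sum_add_distrib,
    ← Finset.mul_sum, sum_fderiv_single_sq]

lemma neg_lap_rpow_bdist_sub {N : ℕ} (hN : N ≠ 0) {Ω : Set (EuclideanSpace ℝ (Fin N))}
    (hΩo : IsOpen Ω) (hΩb : Bornology.IsBounded Ω) {ρ₀ : ℝ} (hρ₀ : GoodCollar Ω ρ₀) (μ β : ℝ)
    {x : EuclideanSpace ℝ (Fin N)} (hx : x ∈ collar Ω ρ₀) :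
    -lap (fun y => bdist Ω y ^ β) x - μ / bdist Ω x ^ 2 * bdist Ω x ^ β
      = bdist Ω x ^ (β - 2) * ((β * (1 - β) - μ) - β * bdist Ω x * lap (bdist Ω) x) := by
  obtain ⟨-, hC2, hgrad, -⟩ := hρ₀
  have hpos : ∀ y ∈ collar Ω ρ₀, 0 < bdist Ω y := fun y hy => bdist_pos hN hΩo hΩb hy.1
  set δ := bdist Ω x
  have hδ : 0 < δ := hpos x hx
  have hβ1 : δ ^ (β - 1) = δ ^ (β - 2) * δ := by
    rw [← rpow_add_one hδ.ne']; ring_nf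
  have hβ : δ ^ β = δ ^ (β - 2) * δ ^ 2 := by
    rw [← rpow_natCast, ← rpow_add hδ]; norm_num
  rw [lap_rpow (isOpen_collar_s4 hΩo ρ₀) hC2 hpos hx, hgrad x hx, hβ1, hβ]
  field_simp
  ring

lemma exists_collar_abs_mul_lt {N : ℕ} {Ω : Set (EuclideanSpace ℝ (Fin N))} {ρ₀ : ℝ}
    (hρ₀ : 0 < ρ₀) {g : EuclideanSpace ℝ (Fin N) → ℝ} {M : ℝ}
    (hM : ∀ x ∈ collar Ω ρ₀, |g x| ≤ M) (β : ℝ) {ε : ℝ} (hε : 0 < ε) :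
    ∃ ρ, 0 < ρ ∧ ρ < ρ₀ ∧ ∀ x ∈ collar Ω ρ, |β * bdist Ω x * g x| < ε := by
  set K := |β| * max M 0 + 1
  have hK : 0 < K := by positivity
  refine ⟨min (ρ₀ / 2) (ε / K), by positivity, by linarith [min_le_left (ρ₀ / 2) (ε / K)], ?_⟩
  intro x hx
  have hx₀ : x ∈ collar Ω ρ₀ :=
    collar_subset_collar Ω ((min_le_left _ _).trans (by linarith)) hx
  have hδ : 0 ≤ bdist Ω x := infDist_nonneg
  have hδε : K * bdist Ω x < ε := by
    have := hx.2.trans_le (min_le_right _ _)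
    rwa [lt_div_iff₀ hK, mul_comm] at this
  calc |β * bdist Ω x * g x| = |β| * |g x| * bdist Ω x := by
        rw [abs_mul, abs_mul, abs_of_nonneg hδ]; ring
    _ ≤ |β| * max M 0 * bdist Ω x := by
        gcongr; exact (hM x hx₀).trans (le_max_left _ _)
    _ ≤ K * bdist Ω x := by gcongr; linarith
    _ < ε := hδε

lemma exists_collar_mul_neg_lap_rpow_bdist_sub_pos {N : ℕ} (hN : N ≠ 0)
    {Ω : Set (EuclideanSpace ℝ (Fin N))} (hΩo : IsOpen Ω) (hΩb : Bornology.IsBounded Ω)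
    {ρ₀ : ℝ} (hρ₀ : GoodCollar Ω ρ₀) (μ β : ℝ) (hc : β * (1 - β) - μ ≠ 0) :
    ∃ ρ, 0 < ρ ∧ ρ < ρ₀ ∧ ContDiffOn ℝ 2 (fun x => bdist Ω x ^ β) (collar Ω ρ) ∧
      ∀ x ∈ collar Ω ρ, 0 < (β * (1 - β) - μ) *
        (-lap (fun y => bdist Ω y ^ β) x - μ / bdist Ω x ^ 2 * bdist Ω x ^ β) := by
  have ⟨hρ₀pos, hC2, _, M, hM⟩ := hρ₀
  set c := β * (1 - β) - μ
  obtain ⟨ρ, hρ, hρρ₀, hsmall⟩ := exists_collar_abs_mul_lt hρ₀pos hM β (abs_pos.mpr hc)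
  have hsub : collar Ω ρ ⊆ collar Ω ρ₀ := collar_subset_collar Ω hρρ₀.le
  refine ⟨ρ, hρ, hρρ₀, fun x hx => ?_, fun x hx => ?_⟩
  · exact ((hC2.contDiffAt ((isOpen_collar_s4 hΩo ρ₀).mem_nhds (hsub hx))).rpow_const_of_ne
      (bdist_pos hN hΩo hΩb hx.1).ne').contDiffWithinAt
  · rw [neg_lap_rpow_bdist_sub hN hΩo hΩb hρ₀ μ β (hsub hx), mul_left_comm]
    set t := β * bdist Ω x * lap (bdist Ω) x
    have hct : c * t < c * c := calc
      c * t ≤ |c| * |t| := by rw [← abs_mul]; exact le_abs_self _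
      _ < |c| * |c| := mul_lt_mul_of_pos_left (hsmall x hx) (abs_pos.mpr hc)
      _ = c * c := abs_mul_abs_self c
    exact mul_pos (rpow_pos_of_pos (bdist_pos hN hΩo hΩb hx.1) _) (by linarith)

lemma mul_one_sub_sub_eq {μ : ℝ} (hμ : μ ≤ 1 / 4) (β : ℝ) :
    β * (1 - β) - μ = (β - (1 / 2 - √(1 / 4 - μ))) * (1 / 2 + √(1 / 4 - μ) - β) := by
  have := sq_sqrt (show 0 ≤ 1 / 4 - μ by linarith)
  linear_combination -this

theorem stmt4_general {N : ℕ} (hN : 2 ≤ N) (Ω : Set (EuclideanSpace ℝ (Fin N)))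
    (hΩo : IsOpen Ω) (hΩb : Bornology.IsBounded Ω)
    (ρ₀ : ℝ) (hρ₀ : GoodCollar Ω ρ₀) (μ : ℝ) (hμ : μ < 1 / 4) :
    (∀ β : ℝ, 1 / 2 - Real.sqrt (1 / 4 - μ) < β → β < 1 / 2 + Real.sqrt (1 / 4 - μ) →
      ∃ ρ, 0 < ρ ∧ ρ < ρ₀ ∧
        SuperHarm Ω μ (collar Ω ρ) (fun x => bdist Ω x ^ β)) ∧
    (∀ β : ℝ, (β < 1 / 2 - Real.sqrt (1 / 4 - μ) ∨ 1 / 2 + Real.sqrt (1 / 4 - μ) < β) →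
      ∃ ρ, 0 < ρ ∧ ρ < ρ₀ ∧
        SubHarm Ω μ (collar Ω ρ) (fun x => bdist Ω x ^ β)) := by
  have hN0 : N ≠ 0 := by omega
  have hsqrt : 0 ≤ √(1 / 4 - μ) := sqrt_nonneg _
  constructor
  · intro β hlo hhi
    have hc : 0 < β * (1 - β) - μ := by
      rw [mul_one_sub_sub_eq hμ.le]; exact mul_pos (by linarith) (by linarith)
    obtain ⟨ρ, hρ, hρρ₀, hC2, hsign⟩ :=
      exists_collar_mul_neg_lap_rpow_bdist_sub_pos hN0 hΩo hΩb hρ₀ μ β hc.ne'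
    exact ⟨ρ, hρ, hρρ₀, hC2, fun x hx => (pos_of_mul_pos_right (hsign x hx) hc.le).le⟩
  · intro β hβ
    have hc : β * (1 - β) - μ < 0 := by
      rw [mul_one_sub_sub_eq hμ.le]
      rcases hβ with hβ | hβ
      · exact mul_neg_of_neg_of_pos (by linarith) (by linarith)
      · exact mul_neg_of_pos_of_neg (by linarith) (by linarith)
    obtain ⟨ρ, hρ, hρρ₀, hC2, hsign⟩ :=
      exists_collar_mul_neg_lap_rpow_bdist_sub_pos hN0 hΩo hΩb hρ₀ μ β hc.ne
    exact ⟨ρ, hρ, hρρ₀, hC2, fun x hx => (neg_of_mul_pos_right (hsign x hx) hc.le).le⟩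

/-- Let `μ < 1/4` and `β₋ = 1/2 - √(1/4-μ)`, `β₊ = 1/2 + √(1/4-μ)`.
(a) If `β₋ < β < β₊` then `δ^β` is a super-harmonic of `L_μ` on some `Ω_ρ`, `ρ ∈ (0,ρ₀)`.
(b) If `β < β₋` or `β > β₊` then `δ^β` is a sub-harmonic of `L_μ` on some such `Ω_ρ`. -/
theorem stmt4 {N : ℕ} (hN : 2 ≤ N) (Ω : Set (EuclideanSpace ℝ (Fin N)))
    (hΩo : IsOpen Ω) (hΩne : Ω.Nonempty) (hΩb : Bornology.IsBounded Ω)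
    (ρ₀ : ℝ) (hρ₀ : GoodCollar Ω ρ₀) (μ : ℝ) (hμ : μ < 1 / 4) :
    (∀ β : ℝ, 1 / 2 - Real.sqrt (1 / 4 - μ) < β → β < 1 / 2 + Real.sqrt (1 / 4 - μ) →
      ∃ ρ, 0 < ρ ∧ ρ < ρ₀ ∧
        SuperHarm Ω μ (collar Ω ρ) (fun x => bdist Ω x ^ β)) ∧
    (∀ β : ℝ, (β < 1 / 2 - Real.sqrt (1 / 4 - μ) ∨ 1 / 2 + Real.sqrt (1 / 4 - μ) < β) →
      ∃ ρ, 0 < ρ ∧ ρ < ρ₀ ∧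
        SubHarm Ω μ (collar Ω ρ) (fun x => bdist Ω x ^ β)) :=
  stmt4_general hN Ω hΩo hΩb ρ₀ hρ₀ μ hμ
end
end
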